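/- arXiv:1907.02396 — 8 statements merged into one kernel-verified Lean document; each statement's English description precedes it below -/
import Mathlib

section
/- Let G be a finite group and φ a coprime automorphism of G (i.e., the order of φ is coprime to |G|). If N is a φ-invariant normal subgroup of G contained in the fixed-point subgroup G_φ = {x ∈ G : x^φ = x}, then the subgroup [G,φ] generated by {x⁻¹·x^φ : x ∈ G} centralizes N. -/
/-! Every `x⁻¹ * φ x` centralizes `N`: applying `φ` to the fixed point `x * n * x⁻¹ ∈ N` gives
`φ x * n * (φ x)⁻¹ = x * n * x⁻¹`. -/

section FixedNormalSubgroup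

variable {G F : Type*} [Group G] [FunLike F G G] [MonoidHomClass F G G]

theorem inv_mul_apply_mem_centralizer_of_forall_apply_eq {φ : F} {N : Subgroup G} [N.Normal]
    (hfix : ∀ x ∈ N, φ x = x) (x : G) : x⁻¹ * φ x ∈ Subgroup.centralizer (N : Set G) := by
  rw [Subgroup.mem_centralizer_iff]
  intro n hn
  have hconj : φ x * n * (φ x)⁻¹ = x * n * x⁻¹ := by
    simpa only [map_mul, map_inv, hfix n hn] using hfix _ (‹N.Normal›.conj_mem n hn x)
  calc n * (x⁻¹ * φ x) = x⁻¹ * (x * n * x⁻¹) * φ x := by group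
    _ = x⁻¹ * (φ x * n * (φ x)⁻¹) * φ x := by rw [hconj]
    _ = x⁻¹ * φ x * n := by group

theorem closure_inv_mul_apply_le_centralizer_of_forall_apply_eq {φ : F} {N : Subgroup G}
    [N.Normal] (hfix : ∀ x ∈ N, φ x = x) :
    Subgroup.closure (Set.range fun x : G => x⁻¹ * φ x) ≤ Subgroup.centralizer (N : Set G) :=
  Subgroup.closure_le _ |>.mpr <| Set.range_subset_iff.mpr <|
    inv_mul_apply_mem_centralizer_of_forall_apply_eq hfix

end FixedNormalSubgroup

theorem stmt_0_general {G : Type*} [Group G] (φ : MulAut G)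
    (N : Subgroup G) [N.Normal]
    (hfix : ∀ x ∈ N, φ x = x)
    (g : G) (hg : g ∈ Subgroup.closure (Set.range fun x : G => x⁻¹ * φ x))
    (n : G) (hn : n ∈ N) : g * n = n * g :=
  (Subgroup.mem_centralizer_iff.mp
    (closure_inv_mul_apply_le_centralizer_of_forall_apply_eq hfix hg) n hn).symm

/-- If `φ` is a coprime automorphism of a finite group `G` and `N` is a
`φ`-invariant normal subgroup of `G` contained in the fixed-point subgroup `G_φ`,
then `[G,φ]` (generated by `{x⁻¹ · φ x}`) centralizes `N`. -/
theorem stmt_0 {G : Type*} [Group G] [Finite G] (φ : MulAut G)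
    (hcop : (Nat.card G).Coprime (orderOf φ))
    (N : Subgroup G) [N.Normal]
    (hinv : ∀ x ∈ N, φ x ∈ N)
    (hfix : ∀ x ∈ N, φ x = x)
    (g : G) (hg : g ∈ Subgroup.closure (Set.range fun x : G => x⁻¹ * φ x))
    (n : G) (hn : n ∈ N) : g * n = n * g :=
  stmt_0_general φ N hfix g hg n hn
end

section
/- Let G be a finite group and φ a coprime automorphism of G. Then G = G_{-φ}·G_φ (every element of G can be written as a product of an element of G_{-φ} and an element of G_φ) if and only if no nontrivial element of G_{-φ} is conjugate in G to an element of G_φ. -/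
/-!
The map `x ↦ x⁻¹ φ(x)` from `G` onto `G_{-φ}` has the right cosets of `G_φ` as its fibres, so
`(s, h) ↦ h · w(s)`, with `w(s)` any preimage of `s`, is a bijection `G_{-φ} × G_φ ≃ G`.
Hence multiplication `G_{-φ} × G_φ → G` is onto iff it is one-to-one. A coincidence
`s h = s' h'` means that `s'⁻¹ s` is fixed by `φ`; writing `s = y⁻¹ φ(y)`, `s' = z⁻¹ φ(z)`,
the element `s'⁻¹ s` is conjugate by `φ(z)` to `t⁻¹ φ(t)` with `t = y z⁻¹`, which is trivial
exactly when `s = s'`.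
-/

open Function

section Twisted

variable {G F : Type*} [Group G] [FunLike F G G] [MonoidHomClass F G G] (φ : F)

/-- The set `G_{-φ}`. -/
def twistedCommutators : Set G := {g | ∃ y : G, y⁻¹ * φ y = g}

def twistedFixedMul (p : twistedCommutators φ × fixedPoints φ) : G := p.1 * p.2

variable {φ}

theorem twistedComm_eq_twistedComm_iff {x y : G} :
    x⁻¹ * φ x = y⁻¹ * φ y ↔ φ (y * x⁻¹) = y * x⁻¹ := by
  rw [eq_inv_mul_iff_mul_eq, ← mul_assoc, ← eq_mul_inv_iff_mul_eq, map_mul, map_inv, eq_comm]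

theorem twistedComm_fixed_mul {h : G} (hh : φ h = h) (y : G) :
    (h * y)⁻¹ * φ (h * y) = y⁻¹ * φ y :=
  twistedComm_eq_twistedComm_iff.mpr <| by simpa using hh

theorem twistedComm_mul_fixed {b : G} (hb : φ b = b) (u : G) :
    (u * b)⁻¹ * φ (u * b) = b⁻¹ * (u⁻¹ * φ u) * b := by
  simp only [map_mul, hb, mul_inv_rev, mul_assoc]

theorem conj_twistedComm_mul_inv (y z : G) :
    (φ z)⁻¹ * ((y * z⁻¹)⁻¹ * φ (y * z⁻¹)) * φ z = (z⁻¹ * φ z)⁻¹ * (y⁻¹ * φ y) := by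
  simp only [map_mul, map_inv]
  group

variable (φ)

noncomputable def twistedCommutatorsProdFixedPointsEquiv :
    twistedCommutators φ × fixedPoints φ ≃ G := by
  let w (s : twistedCommutators φ) : G := s.2.choose
  have hw (s : twistedCommutators φ) : (w s)⁻¹ * φ (w s) = s := s.2.choose_spec
  refine Equiv.ofBijective (fun p => p.2 * w p.1) ⟨fun p q hpq => ?_, fun x => ?_⟩
  · dsimp only at hpq
    have hs : p.1 = q.1 := Subtype.ext <| calc
      (p.1 : G) = (p.2 * w p.1)⁻¹ * φ (p.2 * w p.1) := by rw [twistedComm_fixed_mul p.2.2, hw]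
      _ = (q.2 * w q.1)⁻¹ * φ (q.2 * w q.1) := by rw [hpq]
      _ = q.1 := by rw [twistedComm_fixed_mul q.2.2, hw]
    have hh : (p.2 : G) = q.2 := by
      rw [hs] at hpq
      exact mul_right_cancel hpq
    exact Prod.ext hs (Subtype.ext hh)
  · let s : twistedCommutators φ := ⟨x⁻¹ * φ x, x, rfl⟩
    have hfix : φ (x * (w s)⁻¹) = x * (w s)⁻¹ := twistedComm_eq_twistedComm_iff.mp (hw s)
    exact ⟨(s, ⟨x * (w s)⁻¹, hfix⟩), inv_mul_cancel_right x (w s)⟩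

theorem twistedFixedMul_injective_iff_surjective [Finite G] :
    Injective (twistedFixedMul φ) ↔ Surjective (twistedFixedMul φ) :=
  Finite.injective_iff_surjective_of_equiv (twistedCommutatorsProdFixedPointsEquiv φ)

theorem twistedFixedMul_injective_iff :
    Injective (twistedFixedMul φ) ↔
      ∀ s ∈ twistedCommutators φ, ∀ s' ∈ twistedCommutators φ,
        φ (s'⁻¹ * s) = s'⁻¹ * s → s = s' := by
  constructor
  · intro hinj s hs s' hs' hfix
    have h := @hinj (⟨s, hs⟩, ⟨1, map_one φ⟩) (⟨s', hs'⟩, ⟨s'⁻¹ * s, hfix⟩)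
      (by simp [twistedFixedMul])
    exact congrArg (fun p => (p.1 : G)) h
  · rintro H ⟨⟨s, hs⟩, ⟨h, hh⟩⟩ ⟨⟨s', hs'⟩, ⟨h', hh'⟩⟩ (hmul : s * h = s' * h')
    have hquot : s'⁻¹ * s = h' * h⁻¹ := by
      rw [inv_mul_eq_iff_eq_mul, ← mul_assoc, ← hmul, mul_inv_cancel_right]
    have hss' : s = s' := H s hs s' hs' <| by
      rw [hquot, map_mul, map_inv, hh, hh']
    subst hss'
    simp [mul_left_cancel hmul]

theorem forall_twistedCommutators_inv_mul_fixed_iff :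
    (∀ s ∈ twistedCommutators φ, ∀ s' ∈ twistedCommutators φ,
        φ (s'⁻¹ * s) = s'⁻¹ * s → s = s') ↔
      ∀ a ∈ twistedCommutators φ, ∀ c : G, φ (c⁻¹ * a * c) = c⁻¹ * a * c → a = 1 := by
  constructor
  · rintro H _ ⟨x, rfl⟩ c hfix
    set b := c⁻¹ * (x⁻¹ * φ x) * c
    -- `b = s'⁻¹ s` with `s' = c⁻¹ φ(c)` and `s = (x c b)⁻¹ φ(x c b)`
    have hs : (c⁻¹ * φ c) * b ∈ twistedCommutators φ := ⟨x * c * b, by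
      rw [twistedComm_mul_fixed hfix, mul_inv_rev, map_mul]
      group⟩
    have hb : b = 1 := by
      simpa using H _ hs _ ⟨c, rfl⟩ (by rwa [inv_mul_cancel_left])
    simpa [b, mul_assoc] using congrArg (fun t => c * t * c⁻¹) hb
  · rintro H _ ⟨y, rfl⟩ _ ⟨z, rfl⟩ hfix
    rw [← conj_twistedComm_mul_inv] at hfix
    have ht := H _ ⟨y * z⁻¹, rfl⟩ _ hfix
    rw [inv_mul_eq_one] at ht
    exact (twistedComm_eq_twistedComm_iff.mpr ht.symm).symm

end Twisted

theorem stmt_1_general {G : Type*} [Group G] [Finite G] (φ : MulAut G) :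
    (∀ x : G, ∃ g h : G, (∃ y : G, y⁻¹ * φ y = g) ∧ φ h = h ∧ x = g * h) ↔
      (∀ a : G, (∃ y : G, y⁻¹ * φ y = a) → ∀ c : G, φ (c⁻¹ * a * c) = c⁻¹ * a * c → a = 1) := by
  calc (∀ x : G, ∃ g h : G, (∃ y : G, y⁻¹ * φ y = g) ∧ φ h = h ∧ x = g * h)
      ↔ Surjective (twistedFixedMul φ) :=
        ⟨fun H x => let ⟨g, h, hg, hh, hx⟩ := H x; ⟨(⟨g, hg⟩, ⟨h, hh⟩), hx.symm⟩,
         fun H x => let ⟨(g, h), hx⟩ := H x; ⟨g, h, g.2, h.2, hx.symm⟩⟩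
    _ ↔ Injective (twistedFixedMul φ) := (twistedFixedMul_injective_iff_surjective φ).symm
    _ ↔ _ :=
      (twistedFixedMul_injective_iff φ).trans (forall_twistedCommutators_inv_mul_fixed_iff φ)

/-- For a coprime automorphism `φ` of a finite group `G`,
`G = G_{-φ}·G_φ` iff no nontrivial element of `G_{-φ}` is conjugate in `G`
to an element of `G_φ`. -/
theorem stmt_1 {G : Type*} [Group G] [Finite G] (φ : MulAut G)
    (hcop : (Nat.card G).Coprime (orderOf φ)) :
    (∀ x : G, ∃ g h : G, (∃ y : G, y⁻¹ * φ y = g) ∧ φ h = h ∧ x = g * h) ↔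
      (∀ a : G, (∃ y : G, y⁻¹ * φ y = a) → ∀ c : G, φ (c⁻¹ * a * c) = c⁻¹ * a * c → a = 1) :=
  stmt_1_general φ
end

section
/- Let G be a finite nilpotent group admitting a coprime automorphism φ. Then every element x ∈ G can be written uniquely in the form x = g·h where g ∈ G_{-φ} and h ∈ G_φ. -/
/-!
The map `y ↦ y⁻¹ * φ y` is constant exactly on the right cosets of the fixed-point subgroup
`G_φ`, so `|G_{-φ}| * |G_φ| = |G|` and it suffices to show that every element factors.

The key observation: if `φ g = g * e` with `e` fixed, then `φ^k g = g * e^k`, so `e ^ ord φ = 1`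
and coprimality forces `e = 1`. For abelian `G` this makes the image and the kernel of the
homomorphism `y ↦ y⁻¹ * φ y` complementary, which gives the factorisation. In general we induct
along `G → G ⧸ Z(G)`: a factorisation modulo the centre is corrected by central elements, using
the abelian case in `Z(G)` twice, once to lift the fixed coset to a fixed element and once to
factor the remaining central error.
-/

open Subgroup

namespace MulAut

variable {G : Type*} [Group G]

def fixedSubgroup (φ : MulAut G) : Subgroup G := (φ : G →* G).eqLocus (MonoidHom.id G)

@[simp]
theorem mem_fixedSubgroup {φ : MulAut G} {g : G} : g ∈ φ.fixedSubgroup ↔ φ g = g := Iff.rfl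

def quotient (H : Subgroup G) [H.Characteristic] : MulAut G →* MulAut (G ⧸ H) where
  toFun φ := QuotientGroup.congr H H φ (characteristic_iff_map_eq.mp inferInstance φ)
  map_one' := by ext ⟨x⟩; rfl
  map_mul' _ _ := by ext ⟨x⟩; rfl

@[simp]
theorem quotient_apply_mk (H : Subgroup G) [H.Characteristic] (φ : MulAut G)
    (g : G) : quotient H φ (g : G ⧸ H) = φ g := rfl

theorem eq_one_of_apply_eq_mul_of_fixed [Finite G] {φ : MulAut G} {n : ℕ} (hφ : φ ^ n = 1)
    (hn : (Nat.card G).Coprime n) {g e : G} (he : φ e = e) (hg : φ g = g * e) : e = 1 := by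
  have hpow (k : ℕ) : (φ ^ k) g = g * e ^ k := by
    induction k with
    | zero => simp
    | succ k ih => rw [pow_succ', mul_apply, ih, map_mul, map_pow, he, hg, mul_assoc, pow_succ']
  have : e ^ n = 1 := by simpa [hφ] using (hpow n).symm
  exact (pow_eq_one_iff_of_coprime hn).mp ⟨pow_card_eq_one', this⟩

theorem card_range_inv_mul_apply_mul_card_fixedSubgroup (φ : MulAut G) :
    Nat.card (Set.range fun y => y⁻¹ * φ y) * Nat.card φ.fixedSubgroup = Nat.card G := by
  have hker : Setoid.ker (fun y => y⁻¹ * φ y) = QuotientGroup.rightRel φ.fixedSubgroup := by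
    ext a b
    rw [Setoid.ker_def, QuotientGroup.rightRel_apply, mem_fixedSubgroup, map_mul, map_inv,
      eq_inv_mul_iff_mul_eq, ← mul_assoc, mul_inv_eq_iff_eq_mul, eq_comm]
  rw [← Nat.card_congr (Setoid.quotientKerEquivRange _), hker,
    Nat.card_congr (QuotientGroup.quotientRightRelEquivQuotientLeftRel _), ← index, index_mul_card]

end MulAut

namespace CommGroup
open MulAut

theorem exists_eq_inv_mul_apply_mul_fixed {A : Type*} [CommGroup A] [Finite A] {ψ : MulAut A}
    {n : ℕ} (hψ : ψ ^ n = 1) (hn : (Nat.card A).Coprime n) (a : A) :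
    ∃ w e, ψ e = e ∧ a = w⁻¹ * ψ w * e := by
  set θ : A →* A := (MonoidHom.id A)⁻¹ * ψ
  have hθ (w : A) : θ w = w⁻¹ * ψ w := rfl
  have hker {e : A} : e ∈ θ.ker ↔ ψ e = e := by rw [MonoidHom.mem_ker, hθ, inv_mul_eq_one, eq_comm]
  have hcompl : IsComplement' θ.range θ.ker := by
    refine isComplement'_of_card_mul_and_disjoint ?_ ?_
    · rw [← index_ker, index_mul_card]
    · rw [disjoint_def]
      rintro _ ⟨w, rfl⟩ hfix
      exact eq_one_of_apply_eq_mul_of_fixed hψ hn (hker.mp hfix) (by rw [hθ, mul_inv_cancel_left])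
  obtain ⟨⟨⟨_, w, rfl⟩, ⟨e, he⟩⟩, hwe⟩ := hcompl.2 a
  exact ⟨w, e, hker.mp he, hwe.symm⟩

end CommGroup

namespace MulAut

variable {G : Type*} [Group G]

theorem apply_mem_center (φ : MulAut G) {g : G} (hg : g ∈ center G) : φ g ∈ center G :=
  (characteristic (center G) φ ⟨g, hg⟩).2

variable [Finite G] {φ : MulAut G} {n : ℕ}

open scoped IsMulCommutative in
theorem exists_mem_center_eq_inv_mul_apply_mul_fixed (hφ : φ ^ n = 1)
    (hn : (Nat.card G).Coprime n) {a : G} (ha : a ∈ center G) :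
    ∃ w ∈ center G, ∃ e, φ e = e ∧ a = w⁻¹ * φ w * e := by
  have hφZ : characteristic (center G) φ ^ n = 1 := by rw [← map_pow, hφ, map_one]
  obtain ⟨w, e, he, hwe⟩ := CommGroup.exists_eq_inv_mul_apply_mul_fixed hφZ
    (hn.coprime_dvd_left (card_subgroup_dvd_card _)) ⟨a, ha⟩
  exact ⟨w, w.2, e, congrArg Subtype.val he, congrArg Subtype.val hwe⟩

theorem exists_mem_center_apply_mul_eq (hφ : φ ^ n = 1) (hn : (Nat.card G).Coprime n) {h : G}
    (hh : h⁻¹ * φ h ∈ center G) : ∃ z ∈ center G, φ (h * z) = h * z := by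
  obtain ⟨w, hw, e, he, hc⟩ := exists_mem_center_eq_inv_mul_apply_mul_fixed hφ hn hh
  have hφe : φ (h * w⁻¹) = h * w⁻¹ * e := by
    calc φ (h * w⁻¹) = h * (h⁻¹ * φ h) * (φ w)⁻¹ := by rw [map_mul, map_inv, mul_inv_cancel_left]
    _ = h * w⁻¹ * (φ w * e) * (φ w)⁻¹ := by rw [hc]; group
    _ = h * w⁻¹ * e := by rw [← mem_center_iff.mp (φ.apply_mem_center hw) e]; group
  have he1 : e = 1 := eq_one_of_apply_eq_mul_of_fixed hφ hn he hφe
  exact ⟨w⁻¹, inv_mem hw, by rw [hφe, he1, mul_one]⟩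

theorem exists_eq_inv_mul_apply_mul_fixed_of_quotient_center (hφ : φ ^ n = 1)
    (hn : (Nat.card G).Coprime n) {x : G}
    (hx : ∃ y h, quotient (center G) φ h = h ∧
      (x : G ⧸ center G) = y⁻¹ * quotient (center G) φ y * h) :
    ∃ y h, φ h = h ∧ x = y⁻¹ * φ y * h := by
  obtain ⟨y', h', hh', hx⟩ := hx
  obtain ⟨y, rfl⟩ := QuotientGroup.mk_surjective y'
  obtain ⟨h₀, rfl⟩ := QuotientGroup.mk_surjective h'
  obtain ⟨z, hz, hh⟩ := exists_mem_center_apply_mul_eq hφ hn (QuotientGroup.eq.mp hh'.symm)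
  have hd : (y⁻¹ * φ y * (h₀ * z))⁻¹ * x ∈ center G := by
    rw [← QuotientGroup.eq]
    simp [hx, (QuotientGroup.eq_one_iff z).mpr hz]
  obtain ⟨w, hw, e, he, hd⟩ := exists_mem_center_eq_inv_mul_apply_mul_fixed hφ hn hd
  have hwφw : w⁻¹ * φ w ∈ center G := mul_mem (inv_mem hw) (φ.apply_mem_center hw)
  refine ⟨w * y, h₀ * z * e, by rw [map_mul, hh, he], ?_⟩
  calc x = y⁻¹ * φ y * (h₀ * z) * (w⁻¹ * φ w * e) := by rw [← hd]; group
  _ = y⁻¹ * ((φ y * (h₀ * z)) * (w⁻¹ * φ w)) * e := by group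
  _ = y⁻¹ * ((w⁻¹ * φ w) * (φ y * (h₀ * z))) * e := by rw [mem_center_iff.mp hwφw]
  _ = (w * y)⁻¹ * φ (w * y) * (h₀ * z * e) := by rw [map_mul]; group

theorem exists_eq_inv_mul_apply_mul_fixed [Group.IsNilpotent G] (hφ : φ ^ n = 1)
    (hn : (Nat.card G).Coprime n) (x : G) : ∃ y h, φ h = h ∧ x = y⁻¹ * φ y * h := by
  refine Group.nilpotent_center_quotient_ind (P := fun G _ _ => ∀ [Finite G] {φ : MulAut G} {n : ℕ},
    φ ^ n = 1 → (Nat.card G).Coprime n → ∀ x : G, ∃ y h, φ h = h ∧ x = y⁻¹ * φ y * h)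
    G ?_ ?_ hφ hn x
  · intro G _ _ _ _ _ _ _ x
    exact ⟨1, x, Subsingleton.elim _ _, Subsingleton.elim _ _⟩
  · intro G _ _ ih _ φ n hφ hn x
    refine exists_eq_inv_mul_apply_mul_fixed_of_quotient_center hφ hn (ih (n := n) ?_ ?_ x)
    · rw [← map_pow, hφ, map_one]
    · exact hn.coprime_dvd_left (card_quotient_dvd_card _)

theorem isComplement_range_inv_mul_apply_fixedSubgroup [Group.IsNilpotent G] (hφ : φ ^ n = 1)
    (hn : (Nat.card G).Coprime n) :
    IsComplement (Set.range fun y => y⁻¹ * φ y) φ.fixedSubgroup := by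
  refine Function.Surjective.bijective_of_nat_card_le ?_ ?_
  · intro x
    obtain ⟨y, h, hh, rfl⟩ := exists_eq_inv_mul_apply_mul_fixed hφ hn x
    exact ⟨(⟨_, y, rfl⟩, ⟨h, hh⟩), rfl⟩
  · rw [Nat.card_prod, ← card_range_inv_mul_apply_mul_card_fixedSubgroup φ]
    rfl

end MulAut

/-- If `φ` is a coprime automorphism of a finite nilpotent group `G`,
then every `x ∈ G` can be written uniquely as `x = g·h` with `g ∈ G_{-φ}`, `h ∈ G_φ`. -/
theorem stmt_3 {G : Type*} [Group G] [Finite G] [Group.IsNilpotent G] (φ : MulAut G)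
    (hcop : (Nat.card G).Coprime (orderOf φ)) :
    ∀ x : G, ∃! gh : G × G,
      (∃ y : G, y⁻¹ * φ y = gh.1) ∧ φ gh.2 = gh.2 ∧ x = gh.1 * gh.2 := by
  intro x
  obtain ⟨⟨⟨g, hg⟩, ⟨h, hh⟩⟩, hx, huniq⟩ :=
    (φ.isComplement_range_inv_mul_apply_fixedSubgroup (pow_orderOf_eq_one φ) hcop).existsUnique x
  refine ⟨(g, h), ⟨hg, hh, hx.symm⟩, ?_⟩
  rintro ⟨g', h'⟩ ⟨hg', hh', hx'⟩
  have := huniq ⟨⟨g', hg'⟩, ⟨h', hh'⟩⟩ hx'.symm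
  exact Prod.ext (congrArg (·.1.1) this) (congrArg (·.2.1) this)
end

section
/- Let G be a finite soluble group of derived length d = 2 (metabelian), φ a coprime automorphism of G with G = [G,φ] and x^e = 1 for every x ∈ G_{-φ}. Let M = G' be the derived subgroup. Then M^e ≤ Z(G). -/
/-!
Since `G'` is abelian and `φ`-invariant, `m` commutes with `m⁻¹ φ(m) ∈ G'`, so for `m ∈ G'` we get
`φ(m^e) = m^e (m⁻¹ φ(m))^e = m^e`. Applying this to `x m x⁻¹ ∈ G'` shows that `φ` fixes both `m^e`
and its conjugate by `x`, which forces `x⁻¹ φ(x)` to commute with `m^e`. These elements generate `G`.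
-/

section

open Subgroup

variable {G : Type*} [Group G]

theorem commute_of_derivedSeries_two_eq_bot (h : derivedSeries G 2 = ⊥) {a b : G}
    (ha : a ∈ commutator G) (hb : b ∈ commutator G) : Commute a b := by
  rw [derivedSeries_succ, derivedSeries_one, commutator_eq_bot_iff_le_centralizer] at h
  exact (mem_centralizer_iff.1 (h ha) b hb).symm

theorem MulAut.apply_mem_commutator (φ : MulAut G) {m : G} (hm : m ∈ commutator G) :
    φ m ∈ commutator G := by
  rw [← (inferInstance : (commutator G).Characteristic).fixed φ] at hm
  exact hm

section Endomorphism

variable {F : Type*} [FunLike F G G] [MonoidHomClass F G G] (f : F)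

theorem apply_pow_eq_pow_of_commute {m : G} (hcomm : Commute m (f m)) {e : ℕ}
    (he : (m⁻¹ * f m) ^ e = 1) : f (m ^ e) = m ^ e := by
  have hcomm' : Commute m (m⁻¹ * f m) := (Commute.refl m).inv_right.mul_right hcomm
  calc f (m ^ e) = (m * (m⁻¹ * f m)) ^ e := by rw [map_pow, mul_inv_cancel_left]
    _ = m ^ e := by rw [hcomm'.mul_pow, he, mul_one]

theorem commute_inv_mul_apply_of_apply_conj_eq {x z : G} (hz : f z = z)
    (hxz : f (x * z * x⁻¹) = x * z * x⁻¹) : Commute (x⁻¹ * f x) z := by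
  rw [map_mul, map_mul, map_inv, hz] at hxz
  calc x⁻¹ * f x * z = x⁻¹ * (f x * z * (f x)⁻¹) * f x := by group
    _ = z * (x⁻¹ * f x) := by rw [hxz]; group

end Endomorphism

theorem mem_center_of_commute_of_closure_eq_top {S : Set G} (hS : closure S = ⊤) {z : G}
    (hz : ∀ s ∈ S, Commute s z) : z ∈ center G := by
  rw [← SetLike.mem_coe, ← Set.singleton_subset_iff, ← centralizer_eq_top_iff_subset, eq_top_iff,
    ← hS, closure_le]
  exact fun s hs => mem_centralizer_singleton_iff.2 (hz s hs)

end

theorem stmt_7_general {G : Type*} [Group G] (φ : MulAut G) (e : ℕ)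
    (hmeta : derivedSeries G 2 = ⊥)
    (hgen : Subgroup.closure (Set.range fun x : G => x⁻¹ * φ x) = ⊤)
    (hexp : ∀ x : G, (x⁻¹ * φ x) ^ e = 1) :
    ∀ m ∈ commutator G, m ^ e ∈ Subgroup.center G := by
  have hfix : ∀ n ∈ commutator G, φ (n ^ e) = n ^ e := fun n hn =>
    apply_pow_eq_pow_of_commute φ
      (commute_of_derivedSeries_two_eq_bot hmeta hn (φ.apply_mem_commutator hn)) (hexp n)
  intro m hm
  refine mem_center_of_commute_of_closure_eq_top hgen ?_
  rintro _ ⟨x, rfl⟩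
  refine commute_inv_mul_apply_of_apply_conj_eq φ (hfix m hm) ?_
  rw [← conj_pow]
  exact hfix _ ((Subgroup.commutator_normal ⊤ ⊤).conj_mem m hm x)

/-- Let `G` be a finite metabelian group with a coprime automorphism `φ`
such that `G = [G,φ]` and `x^e = 1` for every `x ∈ G_{-φ}`. Then `(G')^e ≤ Z(G)`. -/
theorem stmt_7 {G : Type*} [Group G] [Finite G] (φ : MulAut G) (e : ℕ)
    (hcop : (Nat.card G).Coprime (orderOf φ))
    (hmeta : derivedSeries G 2 = ⊥)
    (hgen : Subgroup.closure (Set.range fun x : G => x⁻¹ * φ x) = ⊤)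
    (hexp : ∀ x : G, (x⁻¹ * φ x) ^ e = 1) :
    ∀ m ∈ commutator G, m ^ e ∈ Subgroup.center G :=
  stmt_7_general φ e hmeta hgen hexp
end

section
/- Let G be a finite group and φ a coprime automorphism of G. Let {N_i : i ∈ I} be a family of normal φ-invariant subgroups of G and N = ∏_i N_i their product. Then N_φ = ∏_i (N_i)_φ, i.e., the fixed points of φ in N are the product of the fixed points in the N_i. -/
/-- The fixed-point subgroup of an automorphism. -/
def fixedSubgroup {G : Type*} [Group G] (φ : G ≃* G) : Subgroup G where
  carrier := {x | φ x = x}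
  one_mem' := map_one φ
  mul_mem' := by
    intro a b ha hb
    simp only [Set.mem_setOf_eq, map_mul] at *
    rw [ha, hb]
  inv_mem' := by
    intro a ha
    simp only [Set.mem_setOf_eq, map_inv] at *
    rw [ha]

/-!
Write a fixed point of `φ` in `M ⊔ K` (with `K` normal) as `m * k`. Then `a = m⁻¹ * φ m` lies in
`D = M ⊓ K`, and it suffices to find `b ∈ D` with `a * φ b = b`: then `m * b ∈ M` and
`b⁻¹ * k ∈ K` are both fixed by `φ`. Such a `b` is a fixed point of the twisted map
`x ↦ a * φ x`, whose `n`-th iterate is the identity on `D` for `n = orderOf φ`. When `|D|` is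
coprime to `n`, pick a prime `p ∣ n`: the `(n / p)`-th iterate has order dividing `p` on `D`, so
counting modulo `p` gives one of its fixed points `x`, and conjugating by `x` reduces the problem
to the twisted map of `x⁻¹ * a * φ x` on the fixed points of `φ ^ (n / p)` in `D`, with `n / p`
in place of `n`. Since `G` is finite, only finitely many `N i` matter, and the theorem follows by
adding them one at a time.
-/

open Function Set

theorem Set.MapsTo.exists_fixed_of_iterate_prime {α : Type*} {s : Set α} [Finite s] {f : α → α}
    (hf : MapsTo f s s) {p : ℕ} (hp : p.Prime) (hfp : ∀ x ∈ s, f^[p] x = x)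
    (hs : ¬ p ∣ Nat.card s) : ∃ x ∈ s, f x = x := by
  classical
  have : Fact p.Prime := ⟨hp⟩
  have : Fintype s := Fintype.ofFinite s
  let g : Function.End s := hf.restrict f s s
  have hperiod : g ^ p ^ 1 = 1 := by
    change (hf.restrict f s s)^[p ^ 1] = id
    funext x
    exact Subtype.ext <| by rw [pow_one, MapsTo.coe_iterate_restrict, hfp x x.2]; rfl
  have hmod := Equiv.Perm.card_fixedPoints_modEq hperiod
  have hne : Fintype.card (fixedPoints g) ≠ 0 := fun h0 => by
    rw [h0, Nat.modEq_zero_iff_dvd, ← Nat.card_eq_fintype_card] at hmod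
    exact hs hmod
  obtain ⟨⟨⟨x, hx⟩, hfix⟩⟩ := Fintype.card_pos_iff.mp (Nat.pos_of_ne_zero hne)
  exact ⟨x, hx, congrArg Subtype.val hfix⟩

section Twist

variable {G : Type*} [Group G]

def twistMap (φ : MulAut G) (a : G) : G → G := fun x => a * φ x

variable (φ : MulAut G)

lemma twistMap_iterate_mul (a : G) (k : ℕ) (x g : G) :
    (twistMap φ a)^[k] (x * g) = (twistMap φ a)^[k] x * (φ ^ k) g := by
  induction k with
  | zero => simp
  | succ k ih =>
    simp only [iterate_succ_apply', ih, twistMap, map_mul, pow_succ', MulAut.mul_apply, mul_assoc]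

lemma twistMap_one_iterate (k : ℕ) (x : G) : (twistMap φ 1)^[k] x = (φ ^ k) x := by
  induction k generalizing x with
  | zero => rfl
  | succ k ih => rw [iterate_succ_apply, ih, twistMap, one_mul, ← MulAut.mul_apply, ← pow_succ]

lemma twistMap_conj_iterate (a x : G) (k : ℕ) (y : G) :
    (twistMap φ (x⁻¹ * a * φ x))^[k] y = x⁻¹ * (twistMap φ a)^[k] (x * y) := by
  induction k generalizing y with
  | zero => simp
  | succ k ih =>
    simp only [iterate_succ_apply, ih]
    simp [twistMap, mul_assoc]

lemma twistMap_iterate_self_of_mem {a : G} {n : ℕ} (hper : (twistMap φ a)^[n] 1 = 1)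
    {H : Subgroup G} (hn : H ≤ fixedSubgroup (φ ^ n : G ≃* G)) {y : G} (hy : y ∈ H) :
    (twistMap φ a)^[n] y = y := by
  have h := twistMap_iterate_mul φ a n 1 y
  rwa [one_mul, hper, one_mul, show (φ ^ n) y = y from hn hy] at h

lemma inv_mul_mem_fixedSubgroup_of_iterate {a : G} {k : ℕ} {u v : G}
    (hu : (twistMap φ a)^[k] u = u) (hv : (twistMap φ a)^[k] v = v) :
    u⁻¹ * v ∈ fixedSubgroup (φ ^ k : G ≃* G) := by
  have h := twistMap_iterate_mul φ a k u (u⁻¹ * v)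
  rw [mul_inv_cancel_left, hu, hv] at h
  change (φ ^ k) (u⁻¹ * v) = u⁻¹ * v
  rw [← mul_right_inj u, ← h, mul_inv_cancel_left]

lemma mapsTo_twistMap {H : Subgroup G} (hH : ∀ x ∈ H, φ x ∈ H) {a : G} (ha : a ∈ H) :
    MapsTo (twistMap φ a) H H :=
  fun _ hx => mul_mem ha (hH _ hx)

theorem exists_twistMap_fixed_of_coprime [Finite G] {H : Subgroup G} (hH : ∀ x ∈ H, φ x ∈ H)
    {n : ℕ} (hn : H ≤ fixedSubgroup (φ ^ n : G ≃* G)) (hcop : (Nat.card H).Coprime n)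
    {a : G} (ha : a ∈ H) (hper : (twistMap φ a)^[n] 1 = 1) : ∃ b ∈ H, twistMap φ a b = b := by
  induction n using Nat.strong_induction_on generalizing H a with
  | _ n ih =>
  rcases Nat.lt_trichotomy n 1 with hn0 | rfl | hn1
  · obtain rfl : n = 0 := by omega
    rw [Nat.coprime_zero_right, Subgroup.card_eq_one] at hcop
    subst hcop
    obtain rfl := Subgroup.mem_bot.mp ha
    exact ⟨1, one_mem _, by simp [twistMap]⟩
  · exact ⟨1, one_mem _, hper⟩
  set p := n.minFac
  have hp : p.Prime := Nat.minFac_prime hn1.ne'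
  set m := n / p
  have hmp : m * p = n := Nat.div_mul_cancel n.minFac_dvd
  obtain ⟨x, hxH, hx⟩ : ∃ x ∈ H, (twistMap φ a)^[m] x = x := by
    refine ((mapsTo_twistMap φ hH ha).iterate m).exists_fixed_of_iterate_prime hp
      (fun y hy => ?_) ?_
    · rw [← iterate_mul, hmp]
      exact twistMap_iterate_self_of_mem φ hper hn hy
    · exact (Nat.Prime.coprime_iff_not_dvd hp).mp (hcop.coprime_dvd_right n.minFac_dvd).symm
  set C := H ⊓ fixedSubgroup (φ ^ m : G ≃* G)
  have hC : ∀ y ∈ C, φ y ∈ C := fun y hy => ⟨hH y hy.1, by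
    change (φ ^ m) (φ y) = φ y
    rw [← MulAut.mul_apply, pow_mul_comm', MulAut.mul_apply, hy.2]⟩
  have haC : x⁻¹ * a * φ x ∈ C := by
    refine Subgroup.mem_inf.mpr ⟨mul_mem (mul_mem (inv_mem hxH) ha) (hH x hxH), ?_⟩
    rw [mul_assoc]
    refine inv_mul_mem_fixedSubgroup_of_iterate φ hx ?_
    change (twistMap φ a)^[m] (twistMap φ a x) = twistMap φ a x
    rw [← iterate_succ_apply, iterate_succ_apply', hx]
  obtain ⟨b, hbC, hb⟩ := ih m (Nat.div_lt_self (by omega) hp.one_lt) hC inf_le_right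
    (Nat.Coprime.coprime_dvd_left (Subgroup.card_dvd_of_le inf_le_left)
      (hcop.coprime_dvd_right ⟨p, hmp.symm⟩)) haC
    (by rw [twistMap_conj_iterate, mul_one, hx, inv_mul_cancel])
  refine ⟨x * b, mul_mem hxH hbC.1, ?_⟩
  have h1 := twistMap_conj_iterate φ a x 1 b
  rw [iterate_one, iterate_one, hb] at h1
  exact (eq_inv_mul_iff_mul_eq.mp h1).symm

end Twist

section Product

variable {G : Type*} [Group G]

theorem Subgroup.iSup_le_comap_iSup {ι : Sort*} (f : G →* G) {N : ι → Subgroup G}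
    (h : ∀ i, N i ≤ (N i).comap f) : ⨆ i, N i ≤ (⨆ i, N i).comap f :=
  iSup_le fun i => (h i).trans (Subgroup.comap_mono (le_iSup N i))

theorem sup_inf_fixedSubgroup_le [Finite G] {φ : MulAut G}
    (hcop : (Nat.card G).Coprime (orderOf φ)) {M K : Subgroup G} [K.Normal]
    (hM : ∀ x ∈ M, φ x ∈ M) (hK : ∀ x ∈ K, φ x ∈ K) :
    (M ⊔ K) ⊓ fixedSubgroup φ ≤ (M ⊓ fixedSubgroup φ) ⊔ (K ⊓ fixedSubgroup φ) := by
  intro x hx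
  obtain ⟨hxMK, hxfix⟩ := Subgroup.mem_inf.mp hx
  obtain ⟨m, hm, k, hk, rfl⟩ := Subgroup.mem_sup_of_normal_right.mp hxMK
  have hmk : φ m * φ k = m * k := (map_mul φ m k).symm.trans hxfix
  have haM : m⁻¹ * φ m ∈ M := mul_mem (inv_mem hm) (hM m hm)
  have haK : m⁻¹ * φ m ∈ K := by
    have : m⁻¹ * φ m = k * (φ k)⁻¹ := by
      rw [inv_mul_eq_iff_eq_mul, ← mul_assoc, eq_mul_inv_iff_mul_eq, hmk]
    rw [this]
    exact mul_mem hk (inv_mem (hK k hk))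
  have hper : (twistMap φ (m⁻¹ * φ m))^[orderOf φ] 1 = 1 := by
    rw [← mul_one m⁻¹, twistMap_conj_iterate, mul_one, twistMap_one_iterate, pow_orderOf_eq_one,
      MulAut.one_apply, inv_mul_cancel]
  have hfixD : M ⊓ K ≤ fixedSubgroup (φ ^ orderOf φ : G ≃* G) := fun y _ => by
    change (φ ^ orderOf φ) y = y
    rw [pow_orderOf_eq_one, MulAut.one_apply]
  obtain ⟨b, hb, hab⟩ := exists_twistMap_fixed_of_coprime φ
    (fun y hy => Subgroup.mem_inf.mpr ⟨hM y hy.1, hK y hy.2⟩) hfixD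
    (Nat.Coprime.coprime_dvd_left (Subgroup.card_subgroup_dvd_card _) hcop) ⟨haM, haK⟩ hper
  have hmb : m * b ∈ fixedSubgroup φ := by
    have h := congrArg (m * ·) hab
    simp only [twistMap, ← mul_assoc, mul_inv_cancel, one_mul] at h
    exact (map_mul φ m b).trans h
  have hsplit : m * k = (m * b) * ((m * b)⁻¹ * (m * k)) := (mul_inv_cancel_left _ _).symm
  rw [hsplit]
  refine Subgroup.mul_mem_sup (Subgroup.mem_inf.mpr ⟨mul_mem hm hb.1, hmb⟩)
    (Subgroup.mem_inf.mpr ⟨?_, mul_mem (inv_mem hmb) hxfix⟩)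
  rw [mul_inv_rev, mul_assoc, inv_mul_cancel_left]
  exact mul_mem (inv_mem hb.2) hk

theorem exists_finset_iSup_le_biSup [Finite G] {ι : Type*} (N : ι → Subgroup G) :
    ∃ s : Finset ι, ⨆ i, N i ≤ ⨆ i ∈ s, N i :=
  CompleteLattice.IsCompactElement.exists_finset_of_le_iSup _
    ((CompleteLattice.isSupFiniteCompact_iff_all_elements_compact _).mp
      (CompleteLattice.WellFoundedGT.isSupFiniteCompact _) _) N le_rfl

end Product

/-- For a coprime automorphism `φ` of a finite group `G` and a family of
normal `φ`-invariant subgroups `N i`, the fixed points of `φ` in the product `∏ N i`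
are the product of the fixed points in the `N i`. -/
theorem stmt_9 {G : Type*} [Group G] [Finite G] (φ : MulAut G)
    (hcop : (Nat.card G).Coprime (orderOf φ))
    {I : Type*} (N : I → Subgroup G)
    (hnorm : ∀ i, (N i).Normal)
    (hinv : ∀ i, ∀ x ∈ N i, φ x ∈ N i) :
    (⨆ i, N i) ⊓ fixedSubgroup (φ : G ≃* G) = ⨆ i, (N i ⊓ fixedSubgroup (φ : G ≃* G)) := by
  classical
  set F := fixedSubgroup (φ : G ≃* G)
  refine le_antisymm ?_ (iSup_le fun i => inf_le_inf_right F (le_iSup N i))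
  have hfin : ∀ s : Finset I, (⨆ i ∈ s, N i) ⊓ F ≤ ⨆ i, (N i ⊓ F) := by
    intro s
    induction s using Finset.induction_on with
    | empty => simp
    | insert j t _ ih =>
      have : (⨆ i ∈ t, N i).Normal := Subgroup.biSup_normal _ _ fun i _ => hnorm i
      rw [Finset.iSup_insert]
      refine (sup_inf_fixedSubgroup_le hcop (hinv j) ?_).trans
        (sup_le (le_iSup (fun i => N i ⊓ F) j) ih)
      exact Subgroup.iSup_le_comap_iSup (φ : G →* G) fun i =>
        Subgroup.iSup_le_comap_iSup (φ : G →* G) fun _ => hinv i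
  obtain ⟨s, hs⟩ := exists_finset_iSup_le_biSup N
  exact (inf_le_inf_right F hs).trans (hfin s)
end

section
/- Let G be a finite nilpotent group of class c generated by a set of elements each of order dividing e. Then the exponent of G divides e^c. -/
/-!
Induct on `c`. The last term `N = γ_c` of the lower central series (indexed from `γ_1 = G`) is
central. If `c = 1` then `G = N` is abelian and generated by elements of order dividing `e`.
Otherwise `N` is generated by commutators `⁅a, b⁆` with `a ∈ γ_{c-1}`, and `b ↦ ⁅a, b⁆` is a
homomorphism into the centre; it kills the generators' `e`-th powers, so `⁅a, b⁆ ^ e = 1`.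
Either way `N` has exponent dividing `e`, while `G ⧸ N` has class `c - 1`, so
`g ^ e ^ (c - 1) ∈ N`.
-/

open Subgroup
open scoped commutatorElement

section

variable {G : Type*} [Group G]

theorem pow_eq_one_of_mem_closure_of_closure_le_center {S : Set G} {e : ℕ}
    (hS : closure S ≤ center G) (hSe : ∀ s ∈ S, s ^ e = 1) {g : G} (hg : g ∈ closure S) :
    g ^ e = 1 := by
  induction hg using closure_induction with
  | mem s hs => exact hSe s hs
  | one => exact one_pow e
  | mul a b ha hb iha ihb =>
    rw [(Commute.symm (mem_center_iff.mp (hS ha) b)).mul_pow, iha, ihb, mul_one]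
  | inv a _ iha => rw [inv_pow, iha, inv_one]

theorem pow_eq_one_of_range_le_center {H : Type*} [Group H] (f : G →* H)
    (hf : f.range ≤ center H) {X : Set G} (hgen : closure X = ⊤) {e : ℕ}
    (hX : ∀ x ∈ X, x ^ e = 1) (g : G) : f g ^ e = 1 := by
  have hg : f g ∈ closure (f '' X) := by
    rw [← MonoidHom.map_closure, hgen]
    exact mem_map_of_mem f (mem_top g)
  refine pow_eq_one_of_mem_closure_of_closure_le_center ?_ ?_ hg
  · rw [← MonoidHom.map_closure, hgen, ← MonoidHom.range_eq_map]
    exact hf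
  · rintro _ ⟨x, hx, rfl⟩
    rw [← map_pow, hX x hx, map_one]

theorem commutatorElement_mul_right_of_mem_center {a b c : G} (h : ⁅a, c⁆ ∈ center G) :
    ⁅a, b * c⁆ = ⁅a, b⁆ * ⁅a, c⁆ := by
  rw [commutatorElement_mul_right_eq_mul_conj, mul_assoc _ b, mem_center_iff.mp h b,
    mul_assoc, mul_inv_cancel_right]

def commutatorHomOfCentral (a : G) (ha : ∀ b, ⁅a, b⁆ ∈ center G) : G →* G where
  toFun b := ⁅a, b⁆
  map_one' := commutatorElement_one_right a
  map_mul' _ _ := commutatorElement_mul_right_of_mem_center (ha _)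

theorem commutatorElement_pow_eq_one {a : G} (ha : ∀ b, ⁅a, b⁆ ∈ center G) {X : Set G}
    (hgen : closure X = ⊤) {e : ℕ} (hX : ∀ x ∈ X, x ^ e = 1) (b : G) : ⁅a, b⁆ ^ e = 1 :=
  pow_eq_one_of_range_le_center (commutatorHomOfCentral a ha)
    (by rintro _ ⟨b, rfl⟩; exact ha b) hgen hX b

theorem lowerCentralSeries_le_center_of_succ_eq_bot {n : ℕ}
    (h : (⊤ : Subgroup G).lowerCentralSeries (n + 1) = ⊥) :
    (⊤ : Subgroup G).lowerCentralSeries n ≤ center G := by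
  intro a ha
  rw [mem_center_iff]
  intro b
  have hab : ⁅a, b⁆ ∈ (⊤ : Subgroup G).lowerCentralSeries (n + 1) :=
    commutator_mem_commutator ha (mem_top b)
  rw [h, mem_bot, commutatorElement_eq_one_iff_commute] at hab
  exact hab.symm

theorem pow_eq_one_of_mem_lowerCentralSeries {c e : ℕ}
    (hbot : (⊤ : Subgroup G).lowerCentralSeries (c + 1) = ⊥) {X : Set G}
    (hgen : closure X = ⊤) (hX : ∀ x ∈ X, x ^ e = 1) {g : G}
    (hg : g ∈ (⊤ : Subgroup G).lowerCentralSeries c) : g ^ e = 1 := by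
  have hcen := lowerCentralSeries_le_center_of_succ_eq_bot hbot
  cases c with
  | zero =>
    rw [Subgroup.lowerCentralSeries_zero, ← hgen] at hcen hg
    exact pow_eq_one_of_mem_closure_of_closure_le_center hcen hX hg
  | succ c =>
    refine pow_eq_one_of_mem_closure_of_closure_le_center hcen ?_ hg
    rintro _ ⟨a, ha, b, -, rfl⟩
    exact commutatorElement_pow_eq_one
      (fun b ↦ hcen (commutator_mem_commutator ha (mem_top b))) hgen hX b

theorem pow_pow_eq_one_of_lowerCentralSeries_eq_bot {c e : ℕ}
    (hbot : (⊤ : Subgroup G).lowerCentralSeries c = ⊥) {X : Set G}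
    (hgen : closure X = ⊤) (hX : ∀ x ∈ X, x ^ e = 1) (g : G) : g ^ e ^ c = 1 := by
  induction c generalizing G with
  | zero =>
    have hg : g ∈ (⊥ : Subgroup G) := hbot ▸ mem_top g
    rw [pow_zero, pow_one, ← mem_bot]
    exact hg
  | succ c ih =>
    set N := (⊤ : Subgroup G).lowerCentralSeries c
    have hmk := QuotientGroup.mk'_surjective N
    have hQbot : (⊤ : Subgroup (G ⧸ N)).lowerCentralSeries c = ⊥ := by
      rw [← map_top_of_surjective _ hmk, ← map_lowerCentralSeries, Subgroup.map_eq_bot_iff,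
        QuotientGroup.ker_mk']
    have hQgen : closure (QuotientGroup.mk' N '' X) = ⊤ := by
      rw [← MonoidHom.map_closure, hgen, map_top_of_surjective _ hmk]
    have hQX : ∀ y ∈ QuotientGroup.mk' N '' X, y ^ e = 1 := by
      rintro _ ⟨x, hx, rfl⟩
      rw [← map_pow, hX x hx, map_one]
    have hgN : g ^ e ^ c ∈ N := by
      rw [← QuotientGroup.ker_mk' N, MonoidHom.mem_ker, map_pow]
      exact ih hQbot hQgen hQX _
    rw [pow_succ, pow_mul]
    exact pow_eq_one_of_mem_lowerCentralSeries hbot hgen hX hgN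

end

theorem stmt_13_general {G : Type*} [Group G] [Group.IsNilpotent G] (c e : ℕ)
    (hc : Group.nilpotencyClass G ≤ c)
    (X : Set G) (hgen : Subgroup.closure X = ⊤) (hX : ∀ x ∈ X, x ^ e = 1) :
    Monoid.exponent G ∣ e ^ c :=
  Monoid.exponent_dvd_of_forall_pow_eq_one <| pow_pow_eq_one_of_lowerCentralSeries_eq_bot
    (Subgroup.lowerCentralSeries_eq_bot_iff_nilpotencyClass_le.mpr hc) hgen hX

/-- A finite nilpotent group of class (at most) `c` generated by elements
of order dividing `e` has exponent dividing `e^c`. -/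
theorem stmt_13 {G : Type*} [Group G] [Finite G] [Group.IsNilpotent G] (c e : ℕ)
    (hc : Group.nilpotencyClass G ≤ c)
    (X : Set G) (hgen : Subgroup.closure X = ⊤) (hX : ∀ x ∈ X, x ^ e = 1) :
    Monoid.exponent G ∣ e ^ c :=
  stmt_13_general c e hc X hgen hX
end

section
/- Let G be a finite group admitting a coprime automorphism φ of order n, and suppose G = [G,φ]. Let F = F(G) be the Fitting subgroup and N = ⟨[F,φ]^G⟩ the normal closure of [F,φ] in G. Then the image of F in G/N is contained in Z(G/N), and consequently the Fitting height of G/N is at most h(G) − 1 when h(G) ≥ 2. -/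
/-- The Fitting subgroup of a group: the join of all nilpotent normal subgroups. -/
def fitting (G : Type u) [Group G] : Subgroup G :=
  ⨆ H ∈ {H : Subgroup G | H.Normal ∧ Group.IsNilpotent H}, H

/-- `FittingHeightLE G h` says the Fitting height of `G` is at most `h`. -/
def FittingHeightLE : ∀ (G : Type u) [Group G], ℕ → Prop
  | G, _, 0 => Subsingleton G
  | G, _, (h + 1) => ∃ (N : Subgroup G) (hN : N.Normal), Group.IsNilpotent N ∧
      (letI := hN; FittingHeightLE (G ⧸ N) h)

/-!
Modulo `N` every element `x` of `F` is fixed by `φ`, and so is each of its conjugates, as `F` is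
normal. Comparing the conjugates of `x` by `a` and by `φ a` shows that the image of `x` commutes
with that of `a⁻¹ * φ a`; these elements generate `G`, so the image of `F` in `G/N` is central.
Hence `(G/N)/Z(G/N)` is a quotient of `G/F`, whose Fitting height is at most `h(G) - 1`, and
passing from a group to its central quotient does not lower a positive Fitting height: the
preimage of a nilpotent normal subgroup under a central extension is again nilpotent.
-/

open Subgroup

theorem Subgroup.isNilpotent_comap_of_ker_le_center {G H : Type*} [Group G] [Group H]
    (f : G →* H) (hf : f.ker ≤ center G) (K : Subgroup H) [Group.IsNilpotent K] :
    Group.IsNilpotent (K.comap f) :=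
  isNilpotent_of_ker_le_center ((f.comp (K.comap f).subtype).codRestrict K fun x => x.2)
    fun _ hx => mem_center_iff.mpr fun y =>
      Subtype.ext (mem_center_iff.mp (hf (congrArg Subtype.val hx)) y)

theorem commute_inv_mul_of_conj_eq {Q : Type*} [Group Q] {a b y : Q}
    (h : b * y * b⁻¹ = a * y * a⁻¹) : Commute (a⁻¹ * b) y :=
  calc a⁻¹ * b * y = a⁻¹ * (b * y * b⁻¹) * b := by group
    _ = a⁻¹ * (a * y * a⁻¹) * b := by rw [h]
    _ = y * (a⁻¹ * b) := by group

theorem map_mem_center_of_conj_fixed {G Q : Type*} [Group G] [Group Q] (φ : MulAut G)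
    (hgen : closure (Set.range fun x : G => x⁻¹ * φ x) = ⊤) (f : G →* Q)
    (hf : Function.Surjective f) {x : G}
    (hx : ∀ g : G, f (φ (g * x * g⁻¹)) = f (g * x * g⁻¹)) : f x ∈ center Q := by
  have hgen_le : closure (Set.range fun a : G => a⁻¹ * φ a) ≤ (centralizer {f x}).comap f := by
    rw [closure_le]
    rintro _ ⟨a, rfl⟩
    have hconj := hx a
    have hfix : f (φ x) = f x := by simpa using hx 1
    simp only [map_mul, map_inv, hfix] at hconj
    rw [SetLike.mem_coe, mem_comap, mem_centralizer_singleton_iff, map_mul, map_inv]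
    exact (commute_inv_mul_of_conj_eq hconj).eq
  rw [mem_center_iff]
  intro q
  obtain ⟨g, rfl⟩ := hf q
  have hg := hgen_le (hgen ▸ mem_top g)
  rwa [mem_comap, mem_centralizer_singleton_iff] at hg

section Fitting

variable {G : Type u} [Group G]

theorem le_fitting {M : Subgroup G} (hM : M.Normal) (hnil : Group.IsNilpotent M) :
    M ≤ fitting G :=
  le_iSup₂ (f := fun H (_ : H ∈ {H : Subgroup G | H.Normal ∧ Group.IsNilpotent H}) => H)
    M ⟨hM, hnil⟩

instance fitting_normal : (fitting G).Normal :=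
  biSup_normal _ (fun H => H) fun _ hH => hH.1

end Fitting

namespace FittingHeightLE

theorem of_surjective : ∀ {k : ℕ} {G H : Type u} [Group G] [Group H] (f : G →* H),
    Function.Surjective f → FittingHeightLE G k → FittingHeightLE H k
  | 0, G, H, _, _, f, hf, hG => by
    have : Subsingleton G := hG
    exact hf.subsingleton
  | k + 1, G, H, _, _, f, hf, ⟨M, hM, hnil, hk⟩ => by
    have hMf : (M.map f).Normal := hM.map f hf
    refine ⟨M.map f, hMf, Group.nilpotent_of_surjective _ (f.subgroupMap_surjective M), ?_⟩
    exact of_surjective (QuotientGroup.map M (M.map f) f (le_comap_map f M))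
      (QuotientGroup.map_surjective_of_surjective _ _ _
        ((QuotientGroup.mk'_surjective _).comp hf) _) hk

variable {G H : Type u} [Group G] [Group H] {k : ℕ}

theorem of_quotient {M : Subgroup G} [M.Normal] (f : G →* H) (hf : Function.Surjective f)
    (hM : M ≤ f.ker) (h : FittingHeightLE (G ⧸ M) k) : FittingHeightLE H k :=
  of_surjective _ (QuotientGroup.lift_surjective_of_surjective _ f hf hM) h

theorem quotient_fitting (h : FittingHeightLE G (k + 1)) : FittingHeightLE (G ⧸ fitting G) k := by
  obtain ⟨M, hM, hnil, hk⟩ := h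
  refine of_quotient (QuotientGroup.mk' _) (QuotientGroup.mk'_surjective _) ?_ hk
  rw [QuotientGroup.ker_mk']
  exact le_fitting hM hnil

theorem of_quotient_center (h : FittingHeightLE (G ⧸ center G) (k + 1)) :
    FittingHeightLE G (k + 1) := by
  obtain ⟨M, hM, hnil, hk⟩ := h
  set P := M.comap (QuotientGroup.mk' (center G))
  have hP : P.Normal := hM.comap _
  refine ⟨P, hP, isNilpotent_comap_of_ker_le_center _ (QuotientGroup.ker_mk' _).le M, ?_⟩
  have hcenter : center G ≤ (QuotientGroup.mk' P).ker := by
    intro z hz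
    rw [QuotientGroup.ker_mk', mem_comap, QuotientGroup.mk'_apply,
      (QuotientGroup.eq_one_iff z).mpr hz]
    exact one_mem M
  refine of_quotient (QuotientGroup.lift _ _ hcenter)
    (QuotientGroup.lift_surjective_of_surjective _ _ (QuotientGroup.mk'_surjective P) hcenter)
    ?_ hk
  intro y hy
  induction y using QuotientGroup.induction_on with
  | H g => exact (QuotientGroup.eq_one_iff g).mpr hy

end FittingHeightLE

theorem stmt_14_general {G : Type u} [Group G] (φ : MulAut G)
    (hgen : Subgroup.closure (Set.range fun x : G => x⁻¹ * φ x) = ⊤) :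
    (∀ x ∈ fitting G,
      (QuotientGroup.mk x :
          G ⧸ Subgroup.normalClosure {g : G | ∃ x ∈ fitting G, x⁻¹ * φ x = g}) ∈
        Subgroup.center
          (G ⧸ Subgroup.normalClosure {g : G | ∃ x ∈ fitting G, x⁻¹ * φ x = g})) ∧
    (∀ h : ℕ, 2 ≤ h → FittingHeightLE G h →
      FittingHeightLE
        (G ⧸ Subgroup.normalClosure {g : G | ∃ x ∈ fitting G, x⁻¹ * φ x = g}) (h - 1)) := by
  set N := normalClosure {g : G | ∃ x ∈ fitting G, x⁻¹ * φ x = g}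
  have hfixed : ∀ x ∈ fitting G, (QuotientGroup.mk (φ x) : G ⧸ N) = QuotientGroup.mk x :=
    fun x hx => Eq.symm <| QuotientGroup.eq.mpr <| subset_normalClosure ⟨x, hx, rfl⟩
  have hcentral : ∀ x ∈ fitting G, (QuotientGroup.mk x : G ⧸ N) ∈ center (G ⧸ N) :=
    fun x hx => map_mem_center_of_conj_fixed φ hgen (QuotientGroup.mk' N)
      (QuotientGroup.mk'_surjective N) fun g => hfixed _ (fitting_normal.conj_mem x hx g)
  refine ⟨hcentral, fun h hh hG => ?_⟩
  obtain ⟨k, rfl⟩ := Nat.exists_eq_add_of_le' hh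
  refine FittingHeightLE.of_quotient_center ?_
  refine (FittingHeightLE.quotient_fitting hG).of_quotient
    ((QuotientGroup.mk' _).comp (QuotientGroup.mk' N))
    ((QuotientGroup.mk'_surjective _).comp (QuotientGroup.mk'_surjective N)) ?_
  intro x hx
  exact (QuotientGroup.eq_one_iff _).mpr (hcentral x hx)

/-- Let `G` be a finite group with a coprime automorphism `φ` of order `n`
and `G = [G,φ]`. Let `F` be the Fitting subgroup and `N` the normal closure of `[F,φ]`
in `G`. Then the image of `F` in `G/N` is central, and if `h(G) ≤ h` with `h ≥ 2` then
`h(G/N) ≤ h - 1`. -/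
theorem stmt_14 {G : Type u} [Group G] [Finite G] (φ : MulAut G) (n : ℕ)
    (hn : orderOf φ = n) (hcop : (Nat.card G).Coprime n)
    (hgen : Subgroup.closure (Set.range fun x : G => x⁻¹ * φ x) = ⊤) :
    (∀ x ∈ fitting G,
      (QuotientGroup.mk x :
          G ⧸ Subgroup.normalClosure {g : G | ∃ x ∈ fitting G, x⁻¹ * φ x = g}) ∈
        Subgroup.center
          (G ⧸ Subgroup.normalClosure {g : G | ∃ x ∈ fitting G, x⁻¹ * φ x = g})) ∧
    (∀ h : ℕ, 2 ≤ h → FittingHeightLE G h →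
      FittingHeightLE
        (G ⧸ Subgroup.normalClosure {g : G | ∃ x ∈ fitting G, x⁻¹ * φ x = g}) (h - 1)) :=
  stmt_14_general φ hgen
end

section
/- Let L be a Lie algebra and K a subalgebra of L generated by r elements h₁,…,h_r such that every Lie commutator in the h_i is ad-nilpotent in L of index at most t. If K is nilpotent of class c, then there is a number u bounded in terms of c, r, t such that [L, K, K, …, K] = 0 with u copies of K. -/
/-!
Expand every element of `K` as a linear combination of values of Lie words in the `hᵢ`; words of
weight greater than `c` vanish, so only the finitely many, say `m`, words of weight at most `c`
occur. By multilinearity it suffices to kill `[x, w₁, …, wᵤ]` for such words. The Jacobi identity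
`[y, b, a] = [y, a, b] + [y, [b, a]]` lets us permute the `wᵢ` modulo commutators with one entry
fewer and the same total weight, which vanish by induction on the number of entries. Since the
total weight is at least `u > c m (t - 1)`, some word occurs at least `t` times; moving these
occurrences to the front produces `[x, w, …, w] = 0`.
-/

/-- Lie commutators (iterated Lie brackets) in the elements of a set `X`. -/
inductive IsLieWord {L : Type v} [LieRing L] (X : Set L) : L → Prop
  | base {x : L} : x ∈ X → IsLieWord X x
  | bracket {x y : L} : IsLieWord X x → IsLieWord X y → IsLieWord X ⁅x, y⁆

namespace LieSubalgebra

variable {R L : Type*} [CommRing R] [LieRing L] [LieAlgebra R L]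

open Submodule in
theorem coe_lieSpan_eq_span_of_forall_lie_mem {s : Set L} (hs : ∀ᵉ (x ∈ s) (y ∈ s), ⁅x, y⁆ ∈ s) :
    lieSpan R L s = span R s := by
  suffices ∀ {x y}, x ∈ span R s → y ∈ span R s → ⁅x, y⁆ ∈ span R s by
    refine le_antisymm ?_ submodule_span_le_lieSpan
    change _ ≤ ({ span R s with lie_mem' := this } : LieSubalgebra R L)
    rw [lieSpan_le]
    exact subset_span
  intro x y hx hy
  induction hx, hy using span_induction₂ with
  | mem_mem x y hx hy => exact subset_span (hs x hx y hy)
  | zero_left y hy => simp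
  | zero_right x hx => simp
  | add_left x y z _ _ _ hx hy => simp [add_mem hx hy]
  | add_right x y z _ _ _ hx hy => simp [add_mem hx hy]
  | smul_left r x y _ _ h => simp [smul_mem _ r h]
  | smul_right r x y _ _ h => simp [smul_mem _ r h]

end LieSubalgebra

inductive LieTree (ι : Type*) : Type _
  | leaf : ι → LieTree ι
  | node : LieTree ι → LieTree ι → LieTree ι

namespace LieTree

variable {ι : Type*}

def weight : LieTree ι → ℕ
  | leaf _ => 1
  | node a b => a.weight + b.weight

lemma one_le_weight (w : LieTree ι) : 1 ≤ w.weight := by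
  induction w with
  | leaf => exact le_rfl
  | node a b ha _ => exact ha.trans (Nat.le_add_right _ _)

lemma finite_setOf_weight_le [Finite ι] (n : ℕ) : {w : LieTree ι | w.weight ≤ n}.Finite := by
  induction n with
  | zero => exact Set.finite_empty.subset fun w hw => absurd ((one_le_weight w).trans hw) (by simp)
  | succ n ih =>
    refine ((Set.finite_range leaf).union (ih.image2 node ih)).subset ?_
    rintro (i | ⟨a, b⟩) hw
    · exact .inl ⟨i, rfl⟩
    · have := one_le_weight a
      have := one_le_weight b
      have hw : a.weight + b.weight ≤ n + 1 := hw
      exact .inr ⟨a, show a.weight ≤ n by omega, b, show b.weight ≤ n by omega, rfl⟩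

def totalWeight (l : List (LieTree ι)) : ℕ := (l.map weight).sum

lemma length_le_totalWeight (l : List (LieTree ι)) : l.length ≤ totalWeight l := by
  rw [totalWeight]
  simpa using List.length_le_sum_of_one_le (l.map weight) (by simp [one_le_weight])

/-- A list of words of weight at most `c` in which no word occurs `t` times has total weight at
most this bound, since there are only `{w | w.weight ≤ c}.ncard` such words. -/
noncomputable def collectionBound (ι : Type*) (c t : ℕ) : ℕ :=
  c * ({w : LieTree ι | w.weight ≤ c}.ncard * (t - 1))

lemma ncard_mul_lt_length_of_collectionBound_lt {c t : ℕ} {l : List (LieTree ι)}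
    (hc : ∀ w ∈ l, w.weight ≤ c) (hl : collectionBound ι c t < totalWeight l) :
    {w : LieTree ι | w.weight ≤ c}.ncard * (t - 1) < l.length := by
  have := List.sum_le_card_nsmul (l.map weight) c (by simpa using hc)
  rw [List.length_map, smul_eq_mul, mul_comm] at this
  exact Nat.lt_of_mul_lt_mul_left (hl.trans_le this)

section Eval

variable {L : Type*} [LieRing L]

def eval (g : ι → L) : LieTree ι → L
  | leaf i => g i
  | node a b => ⁅a.eval g, b.eval g⁆

lemma isLieWord_eval (g : ι → L) (w : LieTree ι) : IsLieWord (Set.range g) (w.eval g) := by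
  induction w with
  | leaf i => exact .base ⟨i, rfl⟩
  | node a b ha hb => exact .bracket ha hb

lemma map_eval {R L' : Type*} [CommRing R] [LieAlgebra R L] [LieRing L'] [LieAlgebra R L']
    (f : L →ₗ⁅R⁆ L') (g : ι → L) (w : LieTree ι) : f (w.eval g) = w.eval (f ∘ g) := by
  induction w with
  | leaf i => rfl
  | node a b ha hb => simp only [eval, LieHom.map_lie, ha, hb]

lemma mem_span_range_eval_of_mem_lieSpan {R : Type*} [CommRing R] [LieAlgebra R L] {g : ι → L}
    {y : L} (hy : y ∈ LieSubalgebra.lieSpan R L (Set.range g)) :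
    y ∈ Submodule.span R (Set.range (eval g)) := by
  rw [← LieSubalgebra.coe_lieSpan_eq_span_of_forall_lie_mem]
  · exact LieSubalgebra.lieSpan_mono (Set.range_subset_iff.2 fun i => ⟨leaf i, rfl⟩ :
      Set.range g ⊆ Set.range (eval g)) hy
  · rintro _ ⟨a, rfl⟩ _ ⟨b, rfl⟩
    exact ⟨node a b, rfl⟩

end Eval

section LowerCentralSeries

open LieModule

variable {R L : Type*} [CommRing R] [LieRing L] [LieAlgebra R L]

lemma lie_eval_mem_lowerCentralSeries (g : ι → L) (w : LieTree ι) {n : ℕ} {y : L}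
    (hy : y ∈ lowerCentralSeries R L L n) :
    ⁅y, w.eval g⁆ ∈ lowerCentralSeries R L L (n + w.weight) := by
  induction w generalizing n y with
  | leaf i =>
    rw [← lie_skew, weight, lowerCentralSeries_succ]
    exact neg_mem (LieSubmodule.lie_mem_lie (LieSubmodule.mem_top _) hy)
  | node a b ha hb =>
    have hab := hb (ha hy)
    have hba := ha (hb hy)
    rw [add_right_comm] at hba
    rw [eval, weight, ← add_assoc, leibniz_lie, ← lie_skew (a.eval g) ⁅y, b.eval g⁆]
    exact add_mem hab (neg_mem hba)

lemma eval_mem_lowerCentralSeries (g : ι → L) (w : LieTree ι) :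
    w.eval g ∈ lowerCentralSeries R L L (w.weight - 1) := by
  induction w with
  | leaf i => simp [weight]
  | node a b ha _ =>
    have := lie_eval_mem_lowerCentralSeries g b ha
    rwa [weight, Nat.sub_add_comm a.one_le_weight]

lemma eval_eq_zero_of_lowerCentralSeries_eq_bot {K : LieSubalgebra R L} {g : ι → L}
    (hg : ∀ i, g i ∈ K) {c : ℕ} (hc : lowerCentralSeries R K K c = ⊥) {w : LieTree ι}
    (hw : c < w.weight) : w.eval g = 0 := by
  let gK : ι → K := fun i => ⟨g i, hg i⟩
  have hmem := antitone_lowerCentralSeries R K K (Nat.le_sub_one_of_lt hw)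
    (eval_mem_lowerCentralSeries gK w)
  rw [hc, LieSubmodule.mem_bot] at hmem
  simpa [hmem, gK, Function.comp_def] using (map_eval K.incl gK w).symm

end LowerCentralSeries

end LieTree

section LeftNormedLie

variable {L : Type*} [LieRing L]

def leftNormedLie (x : L) (l : List L) : L := l.foldl (fun acc y => ⁅acc, y⁆) x

@[simp] lemma leftNormedLie_cons (x y : L) (l : List L) :
    leftNormedLie x (y :: l) = leftNormedLie ⁅x, y⁆ l := rfl

lemma leftNormedLie_append (x : L) (l₁ l₂ : List L) :
    leftNormedLie x (l₁ ++ l₂) = leftNormedLie (leftNormedLie x l₁) l₂ :=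
  List.foldl_append

@[simp] lemma zero_leftNormedLie (l : List L) : leftNormedLie 0 l = 0 := by
  induction l with
  | nil => rfl
  | cons y l ih => simp [ih]

lemma add_leftNormedLie (x x' : L) (l : List L) :
    leftNormedLie (x + x') l = leftNormedLie x l + leftNormedLie x' l := by
  induction l generalizing x x' with
  | nil => rfl
  | cons y l ih => simp [add_lie, ih]

lemma smul_leftNormedLie {R : Type*} [CommRing R] [LieAlgebra R L] (r : R) (x : L) (l : List L) :
    leftNormedLie (r • x) l = r • leftNormedLie x l := by
  induction l generalizing x with
  | nil => rfl
  | cons y l ih => simp [smul_lie, ih]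

lemma leftNormedLie_eq_zero_of_zero_mem {l : List L} (hl : (0 : L) ∈ l) (x : L) :
    leftNormedLie x l = 0 := by
  obtain ⟨l₁, l₂, rfl⟩ := List.mem_iff_append.1 hl
  simp [leftNormedLie_append]

lemma leftNormedLie_replicate {R : Type*} [CommRing R] [LieAlgebra R L] (x a : L) (n : ℕ) :
    leftNormedLie x (List.replicate n a) = ((-LieAlgebra.ad R L a) ^ n) x := by
  induction n generalizing x with
  | zero => rfl
  | succ n ih =>
    rw [List.replicate_succ, leftNormedLie_cons, ih, pow_succ, Module.End.mul_apply,
      LinearMap.neg_apply, LieAlgebra.ad_apply, lie_skew]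

lemma leftNormedLie_swap (x a b : L) (p s : List L) :
    leftNormedLie x (p ++ b :: a :: s) =
      leftNormedLie x (p ++ a :: b :: s) + leftNormedLie x (p ++ ⁅b, a⁆ :: s) := by
  simp only [leftNormedLie_append, leftNormedLie_cons, ← add_leftNormedLie]
  rw [leibniz_lie, ← lie_skew b]
  congr 1
  abel

lemma leftNormedLie_eq_zero_of_forall_mem_span {R : Type*} [CommRing R] [LieAlgebra R L]
    {S : Set L} {x : L} {l : List L} (hl : ∀ y ∈ l, y ∈ Submodule.span R S)
    (hS : ∀ l' : List L, l'.length = l.length → (∀ y ∈ l', y ∈ S) → leftNormedLie x l' = 0) :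
    leftNormedLie x l = 0 := by
  induction l generalizing x with
  | nil => exact hS [] rfl (by simp)
  | cons y l ih =>
    have hS' (z : L) (hz : z ∈ S) (l' : List L) (hlen : l'.length = l.length)
        (hmem : ∀ y ∈ l', y ∈ S) : leftNormedLie ⁅x, z⁆ l' = 0 :=
      hS (z :: l') (by simp [hlen]) (by simpa [hz] using hmem)
    have hy := hl y List.mem_cons_self
    replace hl := fun y hy => hl y (List.mem_cons_of_mem _ hy)
    clear hS
    rw [leftNormedLie_cons]
    induction hy using Submodule.span_induction with
    | mem z hz => exact ih hl (hS' z hz)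
    | zero => simp
    | add z z' _ _ hz hz' => rw [lie_add, add_leftNormedLie, hz, hz', add_zero]
    | smul r z _ hz => rw [lie_smul, smul_leftNormedLie, hz, smul_zero]

end LeftNormedLie

lemma List.exists_lt_count_of_card_mul_lt_length {α : Type*} [DecidableEq α] {l : List α}
    {s : Finset α} {n : ℕ} (hl : ∀ a ∈ l, a ∈ s) (h : s.card * n < l.length) :
    ∃ a ∈ s, n < l.count a := by
  refine Finset.exists_lt_of_sum_lt ?_
  have := Multiset.sum_count_eq_card (m := (l : Multiset α)) hl
  simp only [Multiset.coe_count, Multiset.coe_card] at this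
  simpa [this] using h

namespace LieTree

variable {ι L : Type*} [LieRing L] (g : ι → L)

lemma leftNormedLie_map_eval_perm {l₀ l : List (LieTree ι)} (hl : l₀.Perm l)
    (hnode : ∀ p a b s, (p ++ a :: b :: s).Perm l₀ →
      ∀ x, leftNormedLie x ((p ++ node a b :: s).map (eval g)) = 0)
    (x : L) : leftNormedLie x (l₀.map (eval g)) = leftNormedLie x (l.map (eval g)) := by
  suffices ∀ {l₁ l₂ : List (LieTree ι)}, l₁.Perm l₂ → ∀ p, (p ++ l₁).Perm l₀ →
      ∀ x, leftNormedLie x ((p ++ l₁).map (eval g)) = leftNormedLie x ((p ++ l₂).map (eval g)) from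
    this hl [] (by simp) x
  intro l₁ l₂ h
  induction h with
  | nil => intros; rfl
  | cons a _ ih =>
    intro p hp x
    simpa using ih (p ++ [a]) (by simpa using hp) x
  | swap a b s =>
    intro p hp x
    have := hnode p b a s hp x
    simp only [List.map_append, List.map_cons] at this ⊢
    rw [leftNormedLie_swap, ← eval, this, add_zero]
  | trans h₁₂ _ ih₁₂ ih₂₃ =>
    intro p hp x
    rw [ih₁₂ p hp, ih₂₃ p (((h₁₂.append_left p).symm).trans hp)]

theorem leftNormedLie_map_eval_eq_zero [Finite ι] {c t : ℕ}
    (hpow : ∀ (w : LieTree ι) (x : L), leftNormedLie x (List.replicate t (w.eval g)) = 0)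
    (hbig : ∀ w : LieTree ι, c < w.weight → w.eval g = 0) (l : List (LieTree ι))
    (hl : collectionBound ι c t < totalWeight l) (x : L) :
    leftNormedLie x (l.map (eval g)) = 0 := by
  classical
  induction hn : l.length using Nat.strong_induction_on generalizing l x with
  | _ n ih =>
    by_cases hbig_mem : ∃ w ∈ l, c < w.weight
    · obtain ⟨w, hw, hcw⟩ := hbig_mem
      exact leftNormedLie_eq_zero_of_zero_mem (List.mem_map.2 ⟨w, hw, hbig w hcw⟩) x
    push Not at hbig_mem
    have hfin := finite_setOf_weight_le (ι := ι) c
    obtain ⟨w, -, hw⟩ := List.exists_lt_count_of_card_mul_lt_length (s := hfin.toFinset)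
      (by simpa using hbig_mem)
      (Set.ncard_eq_toFinset_card _ hfin ▸ ncard_mul_lt_length_of_collectionBound_lt hbig_mem hl)
    obtain ⟨rest, hperm⟩ :=
      (List.replicate_sublist_iff.2 (show t ≤ l.count w by omega)).exists_perm_append
    rw [leftNormedLie_map_eval_perm g hperm, List.map_append, leftNormedLie_append,
      List.map_replicate, hpow, zero_leftNormedLie]
    intro p a b s hp x
    refine ih _ ?_ _ ?_ x rfl
    · rw [← hn, ← hp.length_eq]
      simp
    · rw [totalWeight, ← (hp.map weight).sum_eq] at hl
      simpa [totalWeight, weight, add_assoc] using hl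

end LieTree

/-- Khukhro–Shumyatsky lemma: for all `c, r, t` there is a bound `u` such
that if `K` is a subalgebra of a Lie algebra `L` generated by `r` elements all of whose
Lie commutators are ad-nilpotent in `L` of index at most `t`, and `K` is nilpotent of
class at most `c`, then `[L, K, …, K] = 0` with `u` copies of `K`. -/
theorem stmt_16 (c r t : ℕ) :
    ∃ u : ℕ, ∀ (k : Type u₁) (L : Type u₂) [Field k] [LieRing L] [LieAlgebra k L]
      (h : Fin r → L) (K : LieSubalgebra k L),
      K = LieSubalgebra.lieSpan k L (Set.range h) →
      (∀ a : L, IsLieWord (Set.range h) a → ∀ x : L, ((LieAlgebra.ad k L a) ^ t) x = 0) →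
      LieModule.lowerCentralSeries k K K c = ⊥ →
      ∀ (x : L) (f : Fin u → L), (∀ i, f i ∈ K) →
        (List.ofFn f).foldl (fun acc y => ⁅acc, y⁆) x = 0 := by
  refine ⟨LieTree.collectionBound (Fin r) c t + 1, ?_⟩
  intro k L _ _ _ h K hK hnil hc x f hf
  have hhK : ∀ i, h i ∈ K := fun i => hK ▸ LieSubalgebra.subset_lieSpan ⟨i, rfl⟩
  have hpow (w : LieTree (Fin r)) (y : L) : leftNormedLie y (List.replicate t (w.eval h)) = 0 := by
    rw [leftNormedLie_replicate (R := k), neg_pow, Module.End.mul_apply,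
      hnil _ (LieTree.isLieWord_eval h w), map_zero]
  show leftNormedLie x (List.ofFn f) = 0
  refine leftNormedLie_eq_zero_of_forall_mem_span (R := k) (S := Set.range (LieTree.eval h))
    (fun y hy => ?_) fun l hl hS => ?_
  · obtain ⟨i, rfl⟩ := List.mem_ofFn.1 hy
    exact LieTree.mem_span_range_eval_of_mem_lieSpan (hK ▸ hf i)
  obtain ⟨ws, rfl⟩ : l ∈ Set.range (List.map (LieTree.eval h)) := Set.range_list_map _ ▸ hS
  have hweight : LieTree.collectionBound (Fin r) c t < LieTree.totalWeight ws := by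
    simp only [List.length_map, List.length_ofFn] at hl
    have := LieTree.length_le_totalWeight ws
    omega
  exact LieTree.leftNormedLie_map_eval_eq_zero h hpow
    (fun w hw => LieTree.eval_eq_zero_of_lowerCentralSeries_eq_bot hhK hc hw) ws hweight x
end
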